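/- arXiv:2209.04706 — 2 statements merged into one kernel-verified Lean document; each statement's English description precedes it below -/
import Mathlib

section
/- The free group F_n of rank n is bi-orderable. -/
/-!
The Magnus map sends the generator `i` of the free group to the unit `1 + Xᵢ` of the ring of
noncommutative formal power series over `ℤ`. It is injective: if `x_{i₁}^{e₁} ⋯ x_{iₖ}^{eₖ}` is
reduced (consecutive `iⱼ` distinct, all `eⱼ ≠ 0`), the coefficient of `X_{i₁} ⋯ X_{iₖ}` in its
image is `e₁ ⋯ eₖ`, because a factor `(1 + X_{iⱼ})^{eⱼ}` only contains powers of `X_{iⱼ}`.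

Order power series lexicographically, along a well-order on words that refines length. Every
image has constant term `1`, and multiplying a series `d` on either side by a series `u` with
constant term `1` changes the coefficient of a word `w` only by coefficients of `d` at words
shorter than `w`. Hence it preserves the first coefficient at which two series differ, and the
pulled-back order on the free group is invariant under multiplication on both sides.
-/

/-- A bi-ordering on a group: a strict total order invariant under left and
right multiplication. -/
def IsBiOrdering {G : Type*} [Group G] (lt : G → G → Prop) : Prop :=
  IsStrictTotalOrder G lt ∧ (∀ a b c : G, lt a b → lt (c * a) (c * b)) ∧
    (∀ a b c : G, lt a b → lt (a * c) (b * c))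

theorem Pi.isStrictTotalOrder_lex {ι : Type*} {β : ι → Type*} {r : ι → ι → Prop}
    [IsWellOrder ι r] [∀ i, LinearOrder (β i)] :
    IsStrictTotalOrder (∀ i, β i) (Pi.Lex r (· < ·)) where
  toTrichotomous := Pi.trichotomous_lex r _ IsWellFounded.wf
  irrefl _ := fun ⟨_, _, h⟩ => lt_irrefl _ h
  trans := by
    rintro a b c ⟨i, hab, hi⟩ ⟨j, hbc, hj⟩
    rcases trichotomous_of r i j with hij | rfl | hji
    · exact ⟨i, fun k hk => (hab k hk).trans (hbc k (_root_.trans hk hij)), hbc i hij ▸ hi⟩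
    · exact ⟨i, fun k hk => (hab k hk).trans (hbc k hk), hi.trans hj⟩
    · exact ⟨j, fun k hk => (hab k (_root_.trans hk hji)).trans (hbc k hk), (hab j hji).symm ▸ hj⟩

theorem List.length_le_one_of_isChain_append {α : Type*} {i : α} {l₁ l₂ : List α}
    (hl : (l₁ ++ l₂).IsChain (· ≠ ·)) (h : ∀ a ∈ l₁, a = i) : l₁.length ≤ 1 := by
  rcases l₁ with _ | ⟨a, _ | ⟨b, t⟩⟩
  · simp
  · simp
  · simp only [List.cons_append, List.isChain_cons_cons] at hl
    exact absurd ((h a (by simp)).trans (h b (by simp)).symm) hl.1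

noncomputable section

/-- `f w` is the coefficient of the monomial `X w₁ ⋯ X wₖ` for the word `w = [w₁, …, wₖ]`. -/
def FreePowerSeries (σ R : Type*) : Type _ := List σ → R

namespace FreePowerSeries

variable {σ R : Type*}

open Classical in
def splits (w : List σ) : Finset (List σ × List σ) :=
  (Finset.range (w.length + 1)).image fun k => (w.take k, w.drop k)

theorem mem_splits {w : List σ} {p : List σ × List σ} : p ∈ splits w ↔ p.1 ++ p.2 = w := by
  classical
  constructor
  · rw [splits, Finset.mem_image]
    rintro ⟨k, -, rfl⟩
    exact List.take_append_drop k w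
  · rintro rfl
    rw [splits, Finset.mem_image]
    exact ⟨p.1.length, by simp, by simp⟩

theorem splits_nil : splits ([] : List σ) = {([], [])} := by
  ext ⟨u, v⟩
  simp [mem_splits]

@[ext]
theorem ext {f g : FreePowerSeries σ R} (h : ∀ w, f w = g w) : f = g := funext h

section Semiring

variable [Semiring R]

instance : AddCommMonoid (FreePowerSeries σ R) := Pi.addCommMonoid

instance : One (FreePowerSeries σ R) := ⟨fun w => if w = [] then 1 else 0⟩

instance : Mul (FreePowerSeries σ R) := ⟨fun f g w => ∑ p ∈ splits w, f p.1 * g p.2⟩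

theorem zero_apply (w : List σ) : (0 : FreePowerSeries σ R) w = 0 := rfl

theorem add_apply (f g : FreePowerSeries σ R) (w : List σ) : (f + g) w = f w + g w := rfl

theorem one_apply (w : List σ) : (1 : FreePowerSeries σ R) w = if w = [] then 1 else 0 := rfl

theorem mul_apply (f g : FreePowerSeries σ R) (w : List σ) :
    (f * g) w = ∑ p ∈ splits w, f p.1 * g p.2 := rfl

protected theorem one_mul (f : FreePowerSeries σ R) : 1 * f = f := by
  ext w
  rw [mul_apply, Finset.sum_eq_single ([], w)]
  · simp [one_apply]
  · rintro ⟨u, v⟩ huv hne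
    rw [one_apply, if_neg, zero_mul]
    rintro rfl
    simp_all [mem_splits]
  · simp [mem_splits]

protected theorem mul_one (f : FreePowerSeries σ R) : f * 1 = f := by
  ext w
  rw [mul_apply, Finset.sum_eq_single (w, [])]
  · simp [one_apply]
  · rintro ⟨u, v⟩ huv hne
    rw [one_apply, if_neg, mul_zero]
    rintro rfl
    simp_all [mem_splits]
  · simp [mem_splits]

protected theorem mul_assoc (f g h : FreePowerSeries σ R) : f * g * h = f * (g * h) := by
  ext w
  simp only [mul_apply, Finset.sum_mul, Finset.mul_sum, Finset.sum_sigma']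
  apply Finset.sum_nbij' (fun ⟨⟨_, b⟩, ⟨c, d⟩⟩ ↦ ⟨(c, d ++ b), (d, b)⟩)
    (fun ⟨⟨a, _⟩, ⟨c, d⟩⟩ ↦ ⟨(a ++ c, d), (a, c)⟩) <;>
    aesop (add simp [mem_splits, List.append_assoc, mul_assoc])

instance : Semiring (FreePowerSeries σ R) where
  one_mul := FreePowerSeries.one_mul
  mul_one := FreePowerSeries.mul_one
  mul_assoc := FreePowerSeries.mul_assoc
  left_distrib f g h := by ext w; simp [mul_apply, add_apply, mul_add, Finset.sum_add_distrib]
  right_distrib f g h := by ext w; simp [mul_apply, add_apply, add_mul, Finset.sum_add_distrib]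
  zero_mul f := by ext w; simp [mul_apply, zero_apply]
  mul_zero f := by ext w; simp [mul_apply, zero_apply]

def constantCoeff : FreePowerSeries σ R →+* R where
  toFun f := f []
  map_one' := rfl
  map_mul' f g := by simp [mul_apply, splits_nil]
  map_zero' := rfl
  map_add' _ _ := rfl

theorem exists_of_mul_apply_ne_zero {f g : FreePowerSeries σ R} {w : List σ}
    (h : (f * g) w ≠ 0) : ∃ a b, a ++ b = w ∧ f a ≠ 0 ∧ g b ≠ 0 := by
  obtain ⟨⟨a, b⟩, hab, hne⟩ := Finset.exists_ne_zero_of_sum_ne_zero h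
  exact ⟨a, b, mem_splits.1 hab, left_ne_zero_of_mul hne, right_ne_zero_of_mul hne⟩

theorem mul_apply_singleton (f g : FreePowerSeries σ R) (a : σ) :
    (f * g) [a] = f [] * g [a] + f [a] * g [] := by
  classical
  have : splits [a] = ({([], [a]), ([a], [])} : Finset (List σ × List σ)) := by
    ext ⟨u, v⟩
    simp [mem_splits, List.append_eq_singleton_iff]
  rw [mul_apply, this, Finset.sum_pair (by simp)]

variable {u d : FreePowerSeries σ R} {w : List σ}

theorem mul_apply_eq_right (hu : u [] = 1) (hd : ∀ v : List σ, v.length < w.length → d v = 0) :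
    (u * d) w = d w := by
  rw [mul_apply, Finset.sum_eq_single ([], w)]
  · rw [hu, one_mul]
  · rintro ⟨a, b⟩ hab hne
    obtain rfl : a ++ b = w := mem_splits.1 hab
    have : 0 < a.length := List.length_pos_iff.2 (by rintro rfl; simp at hne)
    rw [hd b (by rw [List.length_append]; omega), mul_zero]
  · simp [mem_splits]

theorem mul_apply_eq_left (hu : u [] = 1) (hd : ∀ v : List σ, v.length < w.length → d v = 0) :
    (d * u) w = d w := by
  rw [mul_apply, Finset.sum_eq_single (w, [])]
  · rw [hu, mul_one]
  · rintro ⟨a, b⟩ hab hne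
    obtain rfl : a ++ b = w := mem_splits.1 hab
    have : 0 < b.length := List.length_pos_iff.2 (by rintro rfl; simp at hne)
    rw [hd a (by rw [List.length_append]; omega), zero_mul]
  · simp [mem_splits]

end Semiring

instance [Ring R] : Ring (FreePowerSeries σ R) :=
  { (Pi.addCommGroup : AddCommGroup (List σ → R)),
    (inferInstance : Semiring (FreePowerSeries σ R)) with }

theorem sub_apply [Ring R] (f g : FreePowerSeries σ R) (w : List σ) :
    (f - g) w = f w - g w := rfl

section Lex

variable [Ring R] [PartialOrder R] [IsOrderedAddMonoid R]
  {r : List σ → List σ → Prop} [IsTrans (List σ) r]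

theorem lex_map_of_apply_eq (hr : ∀ v w : List σ, v.length < w.length → r v w)
    (T : FreePowerSeries σ R →+ FreePowerSeries σ R)
    (hT : ∀ d w, (∀ v : List σ, v.length < w.length → d v = 0) → T d w = d w)
    {a b : FreePowerSeries σ R} (h : Pi.Lex r (· < ·) a b) : Pi.Lex r (· < ·) (T a) (T b) := by
  obtain ⟨w, hbelow, hw⟩ := h
  have key : ∀ v, (r v w ∨ v = w) → T b v - T a v = b v - a v := by
    intro v hv
    rw [← sub_apply, ← map_sub]
    refine hT _ _ fun x hx => sub_eq_zero.2 (hbelow x ?_).symm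
    rcases hv with hv | rfl
    · exact _root_.trans (hr _ _ hx) hv
    · exact hr _ _ hx
  refine ⟨w, fun v hv => ?_, ?_⟩
  · exact (sub_eq_zero.1 ((key v (.inl hv)).trans (sub_eq_zero.2 (hbelow v hv).symm))).symm
  · exact sub_pos.1 ((key w (.inr rfl)).symm ▸ sub_pos.2 hw)

theorem lex_mul_left (hr : ∀ v w : List σ, v.length < w.length → r v w)
    {u : FreePowerSeries σ R} (hu : u [] = 1) {a b : FreePowerSeries σ R}
    (h : Pi.Lex r (· < ·) a b) : Pi.Lex r (· < ·) (u * a) (u * b) :=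
  lex_map_of_apply_eq hr (AddMonoidHom.mulLeft u) (fun _ _ => mul_apply_eq_right hu) h

theorem lex_mul_right (hr : ∀ v w : List σ, v.length < w.length → r v w)
    {u : FreePowerSeries σ R} (hu : u [] = 1) {a b : FreePowerSeries σ R}
    (h : Pi.Lex r (· < ·) a b) : Pi.Lex r (· < ·) (a * u) (b * u) :=
  lex_map_of_apply_eq hr (AddMonoidHom.mulRight u) (fun _ _ => mul_apply_eq_left hu) h

end Lex

section Magnus

open scoped Classical

def X [Semiring R] (i : σ) : FreePowerSeries σ R := fun w => if w = [i] then 1 else 0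

theorem X_apply_nil [Semiring R] (i : σ) : (X i : FreePowerSeries σ R) [] = 0 := by simp [X]

theorem X_mul_apply_cons [Semiring R] (i a : σ) (f : FreePowerSeries σ R) (t : List σ) :
    ((X i : FreePowerSeries σ R) * f) (a :: t) = if a = i then f t else 0 := by
  rw [mul_apply, Finset.sum_eq_single ([a], t)]
  · by_cases ha : a = i <;> simp [X, ha]
  · rintro ⟨u, v⟩ huv hne
    rw [X, if_neg, zero_mul]
    rintro rfl
    simp_all [mem_splits]
  · simp [mem_splits]

theorem mul_X_apply_concat [Semiring R] (i a : σ) (f : FreePowerSeries σ R) (t : List σ) :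
    (f * (X i : FreePowerSeries σ R)) (t ++ [a]) = if a = i then f t else 0 := by
  rw [mul_apply, Finset.sum_eq_single (t, [a])]
  · by_cases ha : a = i <;> simp [X, ha]
  · rintro ⟨u, v⟩ huv hne
    rw [X, if_neg, mul_zero]
    rintro rfl
    simp_all [mem_splits]
  · simp [mem_splits]

variable [Ring R]

def invOneAddX (i : σ) : FreePowerSeries σ R :=
  fun w => if ∀ a ∈ w, a = i then (-1) ^ w.length else 0

theorem invOneAddX_nil (i : σ) : (invOneAddX i : FreePowerSeries σ R) [] = 1 := by
  simp [invOneAddX]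

theorem invOneAddX_cons (i a : σ) (t : List σ) :
    (invOneAddX i : FreePowerSeries σ R) (a :: t) = if a = i then -invOneAddX i t else 0 := by
  unfold invOneAddX
  by_cases ha : a = i
  · by_cases ht : ∀ b ∈ t, b = i
    · rw [if_pos (show ∀ b ∈ a :: t, b = i from List.forall_mem_cons.2 ⟨ha, ht⟩), if_pos ha,
        if_pos ht, List.length_cons, pow_succ, mul_neg_one]
    · rw [if_neg (show ¬∀ b ∈ a :: t, b = i from fun h => ht (List.forall_mem_cons.1 h).2),
        if_pos ha, if_neg ht, neg_zero]
  · rw [if_neg (show ¬∀ b ∈ a :: t, b = i from fun h => ha (List.forall_mem_cons.1 h).1),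
      if_neg ha]

theorem invOneAddX_concat (i a : σ) (t : List σ) :
    (invOneAddX i : FreePowerSeries σ R) (t ++ [a]) = if a = i then -invOneAddX i t else 0 := by
  unfold invOneAddX
  by_cases ha : a = i
  · by_cases ht : ∀ b ∈ t, b = i
    · rw [if_pos (show ∀ b ∈ t ++ [a], b = i from List.forall_mem_append.2 ⟨ht, by simpa⟩),
        if_pos ha, if_pos ht, List.length_append, List.length_singleton, pow_succ, mul_neg_one]
    · rw [if_neg (show ¬∀ b ∈ t ++ [a], b = i from fun h => ht fun b hb => h b (by simp [hb])),
        if_pos ha, if_neg ht, neg_zero]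
  · rw [if_neg (show ¬∀ b ∈ t ++ [a], b = i from fun h => ha (h a (by simp))), if_neg ha]

def magnusUnit (i : σ) : (FreePowerSeries σ R)ˣ where
  val := 1 + X i
  inv := invOneAddX i
  val_inv := by
    ext w
    rw [add_mul, one_mul, add_apply]
    rcases w with _ | ⟨a, t⟩
    · simp [invOneAddX_nil, mul_apply, splits_nil, X_apply_nil, one_apply]
    · rw [X_mul_apply_cons, invOneAddX_cons, one_apply, if_neg (List.cons_ne_nil a t)]
      split_ifs <;> simp
  inv_val := by
    ext w
    rw [mul_add, mul_one, add_apply]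
    rcases List.eq_nil_or_concat' w with rfl | ⟨t, a, rfl⟩
    · simp [invOneAddX_nil, mul_apply, splits_nil, X_apply_nil, one_apply]
    · rw [mul_X_apply_concat, invOneAddX_concat, one_apply, if_neg (List.concat_ne_nil a t)]
      split_ifs <;> simp

def magnus : FreeGroup σ →* (FreePowerSeries σ R)ˣ := FreeGroup.lift magnusUnit

theorem magnus_apply_nil (g : FreeGroup σ) :
    ((magnus g : (FreePowerSeries σ R)ˣ) : FreePowerSeries σ R) [] = 1 := by
  suffices h : (Units.map (constantCoeff (σ := σ) (R := R)).toMonoidHom).comp magnus = 1 from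
    congrArg Units.val (DFunLike.congr_fun h g)
  ext i
  simp [magnus, magnusUnit, constantCoeff, add_apply, one_apply, X_apply_nil]

theorem magnusUnit_zpow_apply_nil (i : σ) (k : ℤ) :
    ((magnusUnit i ^ k : (FreePowerSeries σ R)ˣ) : FreePowerSeries σ R) [] = 1 := by
  simpa [magnus] using magnus_apply_nil (R := R) (FreeGroup.of i ^ k)

theorem magnusUnit_zpow_apply_singleton (i : σ) (k : ℤ) :
    ((magnusUnit i ^ k : (FreePowerSeries σ R)ˣ) : FreePowerSeries σ R) [i] = k := by
  induction k using Int.induction_on with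
  | zero => simp [one_apply]
  | succ k ih =>
    rw [zpow_add_one, Units.val_mul, mul_apply_singleton, ih, magnusUnit_zpow_apply_nil]
    simp [magnusUnit, X, one_apply, add_apply, add_comm]
  | pred k ih =>
    rw [zpow_sub_one, Units.val_mul, mul_apply_singleton, ih, magnusUnit_zpow_apply_nil]
    simp [magnusUnit, invOneAddX, sub_eq_neg_add]

end Magnus

section Support

variable [Semiring R]

def SupportedOnPowers (i : σ) (f : FreePowerSeries σ R) : Prop :=
  ∀ w, f w ≠ 0 → ∀ a ∈ w, a = i

theorem SupportedOnPowers.mul {i : σ} {f g : FreePowerSeries σ R} (hf : SupportedOnPowers i f)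
    (hg : SupportedOnPowers i g) : SupportedOnPowers i (f * g) := by
  intro w hw
  obtain ⟨a, b, rfl, ha, hb⟩ := exists_of_mul_apply_ne_zero hw
  intro c hc
  rcases List.mem_append.1 hc with hc | hc
  exacts [hf a ha c hc, hg b hb c hc]

theorem prod_apply_eq_zero_of_length_lt {l : List (σ × FreePowerSeries σ R)}
    (hl : ∀ p ∈ l, SupportedOnPowers p.1 p.2) {w : List σ} (hw : w.IsChain (· ≠ ·))
    (hlen : l.length < w.length) : (l.map Prod.snd).prod w = 0 := by
  induction l generalizing w with
  | nil =>
    rw [List.map_nil, List.prod_nil, one_apply, if_neg (List.ne_nil_of_length_pos hlen)]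
  | cons p l ih =>
    rw [List.map_cons, List.prod_cons]
    by_contra hne
    obtain ⟨a, b, rfl, ha, hb⟩ := exists_of_mul_apply_ne_zero hne
    have := List.length_le_one_of_isChain_append hw (hl p (by simp) a ha)
    refine hb (ih (fun q hq => hl q (by simp [hq])) (List.isChain_append.1 hw).2.1 ?_)
    simp only [List.length_cons, List.length_append] at hlen
    omega

theorem prod_apply_map_fst {l : List (σ × FreePowerSeries σ R)}
    (hl : ∀ p ∈ l, SupportedOnPowers p.1 p.2) (hchain : (l.map Prod.fst).IsChain (· ≠ ·)) :
    (l.map Prod.snd).prod (l.map Prod.fst) = (l.map fun p => p.2 [p.1]).prod := by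
  induction l with
  | nil => simp [one_apply]
  | cons p l ih =>
    obtain ⟨i, f⟩ := p
    have hl' : ∀ q ∈ l, SupportedOnPowers q.1 q.2 := fun q hq => hl q (by simp [hq])
    simp only [List.map_cons, List.prod_cons] at hchain ⊢
    rw [mul_apply, Finset.sum_eq_single ([i], l.map Prod.fst), ih hl' hchain.tail]
    · rintro ⟨a, b⟩ hab hne
      obtain hab : a ++ b = i :: l.map Prod.fst := mem_splits.1 hab
      by_contra hfab
      have hfa : f a ≠ 0 := left_ne_zero_of_mul hfab
      have := List.length_le_one_of_isChain_append (hab ▸ hchain) (hl (i, f) (by simp) a hfa)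
      rcases a with _ | ⟨c, _ | ⟨_, _⟩⟩
      · rw [List.nil_append] at hab
        subst hab
        exact right_ne_zero_of_mul hfab (prod_apply_eq_zero_of_length_lt hl' hchain (by simp))
      · simp_all
      · simp at this
    · simp [mem_splits]

end Support

section Injectivity

open Monoid

variable [Ring R]

theorem supportedOnPowers_magnusUnit_zpow (i : σ) (k : ℤ) :
    SupportedOnPowers i ((magnusUnit i ^ k : (FreePowerSeries σ R)ˣ) : FreePowerSeries σ R) := by
  classical
  have hone : SupportedOnPowers i (1 : FreePowerSeries σ R) := fun w hw => by
    rw [one_apply] at hw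
    split_ifs at hw with h
    · simp [h]
    · exact absurd rfl hw
  have hval : SupportedOnPowers i
      ((magnusUnit i : (FreePowerSeries σ R)ˣ) : FreePowerSeries σ R) := fun w hw => by
    simp only [magnusUnit, add_apply, one_apply, X] at hw
    split_ifs at hw <;> simp_all
  have hinv : SupportedOnPowers i
      (((magnusUnit i)⁻¹ : (FreePowerSeries σ R)ˣ) : FreePowerSeries σ R) := fun w hw => by
    simp only [magnusUnit, Units.inv_mk, invOneAddX] at hw
    split_ifs at hw with h
    · exact h
    · exact absurd rfl hw
  induction k using Int.induction_on with
  | zero => simpa using hone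
  | succ k ih => simpa [zpow_add_one] using ih.mul hval
  | pred k ih => simpa [zpow_sub_one] using ih.mul hinv

/-- Reduced words of this free product are the syllable decompositions `x_{i₁}^{e₁} ⋯ x_{iₖ}^{eₖ}`
(consecutive `iⱼ` distinct, `eⱼ ≠ 0`) of elements of `FreeGroup σ`. -/
def magnusCoprod : CoprodI (fun _ : σ => FreeGroup Unit) →* (FreePowerSeries σ R)ˣ :=
  CoprodI.lift fun i => FreeGroup.lift fun _ => magnusUnit i

theorem magnusCoprod_of (i : σ) (h : FreeGroup Unit) :
    magnusCoprod (CoprodI.of (i := i) h) =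
      (magnusUnit i ^ FreeGroup.freeGroupUnitEquivInt h : (FreePowerSeries σ R)ˣ) := by
  conv_lhs => rw [← FreeGroup.freeGroupUnitEquivInt.symm_apply_apply h]
  simp [magnusCoprod, FreeGroup.freeGroupUnitEquivInt]

theorem magnusCoprod_injective [NoZeroDivisors R] [CharZero R] :
    Function.Injective (magnusCoprod (σ := σ) (R := R)) := by
  classical
  refine (injective_iff_map_eq_one _).2 fun x hx => ?_
  let φ := (Units.coeHom (FreePowerSeries σ R)).comp magnusCoprod
  have hx_eq : x = (CoprodI.Word.equiv x).prod := (CoprodI.Word.equiv.symm_apply_apply x).symm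
  set w := CoprodI.Word.equiv x
  let l := w.toList.map fun p => (p.1, φ (CoprodI.of (i := p.1) p.2))
  have hφx : φ x = (l.map Prod.snd).prod := by
    rw [hx_eq, CoprodI.Word.prod, map_list_prod, List.map_map, List.map_map]
    rfl
  have hl : ∀ p ∈ l, SupportedOnPowers p.1 p.2 := by
    simp only [l, List.mem_map]
    rintro _ ⟨⟨i, h⟩, -, rfl⟩
    simpa [φ, magnusCoprod_of] using supportedOnPowers_magnusUnit_zpow (R := R) i _
  have hchain : (l.map Prod.fst).IsChain (· ≠ ·) := by
    simp only [l, List.map_map]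
    exact (List.isChain_map _).2 w.chain_ne
  have hcoeff := prod_apply_map_fst hl hchain
  have hφ1 : φ x = 1 := by simp [φ, hx]
  rw [← hφx, hφ1] at hcoeff
  by_contra hne
  have hw : w.toList ≠ [] := fun h => hne (by rw [hx_eq, CoprodI.Word.prod, h]; rfl)
  rw [one_apply, if_neg (by simpa [l] using hw)] at hcoeff
  refine List.prod_ne_zero (fun h0 => ?_) hcoeff.symm
  simp only [l, List.mem_map] at h0
  obtain ⟨_, ⟨⟨i, h⟩, hmem, rfl⟩, h0⟩ := h0
  have hk : FreeGroup.freeGroupUnitEquivInt h ≠ 0 := fun hk =>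
    w.ne_one _ hmem (by rw [← FreeGroup.freeGroupUnitEquivInt.symm_apply_apply h, hk]; rfl)
  simp [φ, magnusCoprod_of, magnusUnit_zpow_apply_singleton, hk] at h0

theorem magnus_eq_magnusCoprod_comp :
    (magnus : FreeGroup σ →* (FreePowerSeries σ R)ˣ) =
      magnusCoprod.comp freeGroupEquivCoprodI.toMonoidHom := by
  ext i
  simp [magnus, magnusCoprod]

theorem magnus_injective [NoZeroDivisors R] [CharZero R] :
    Function.Injective (magnus : FreeGroup σ →* (FreePowerSeries σ R)ˣ) := by
  rw [magnus_eq_magnusCoprod_comp]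
  exact magnusCoprod_injective.comp freeGroupEquivCoprodI.injective

end Injectivity

theorem isBiOrdering_lex_comp [Ring R] [LinearOrder R] [IsOrderedAddMonoid R] {G : Type*} [Group G]
    {r : List σ → List σ → Prop} [IsWellOrder (List σ) r]
    (hr : ∀ v w : List σ, v.length < w.length → r v w)
    (φ : G →* (FreePowerSeries σ R)ˣ) (hφ : Function.Injective φ)
    (hφ₁ : ∀ g, (φ g : FreePowerSeries σ R) [] = 1) :
    IsBiOrdering fun g h =>
      Pi.Lex r (· < ·) (φ g : FreePowerSeries σ R) (φ h : FreePowerSeries σ R) := by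
  refine ⟨?_, fun a b c h => ?_, fun a b c h => ?_⟩
  · let e : G ↪ (List σ → R) :=
      ⟨fun g => (φ g : FreePowerSeries σ R),
        (Units.val_injective (α := FreePowerSeries σ R)).comp hφ⟩
    have := Pi.isStrictTotalOrder_lex (β := fun _ : List σ => R) (r := r)
    exact (RelEmbedding.preimage e (Pi.Lex r (· < ·))).isStrictTotalOrder
  · simpa only [map_mul, Units.val_mul] using lex_mul_left hr (hφ₁ c) h
  · simpa only [map_mul, Units.val_mul] using lex_mul_right hr (hφ₁ c) h

end FreePowerSeries

end

theorem FreeGroup.exists_isBiOrdering (σ : Type*) :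
    ∃ lt : FreeGroup σ → FreeGroup σ → Prop, IsBiOrdering lt := by
  obtain ⟨r, hr, _⟩ := IsWellFounded.exists_well_order_ge (InvImage (· < ·) (List.length (α := σ)))
  exact ⟨_, FreePowerSeries.isBiOrdering_lex_comp (R := ℤ) hr
    FreePowerSeries.magnus FreePowerSeries.magnus_injective FreePowerSeries.magnus_apply_nil⟩

/-- The free group `Fₙ` of rank `n` is bi-orderable. -/
theorem freeGroup_biOrderable (n : ℕ) :
    ∃ lt : FreeGroup (Fin n) → FreeGroup (Fin n) → Prop, IsBiOrdering lt :=
  FreeGroup.exists_isBiOrdering (Fin n)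
end

section
/- An iterated semidirect product of free groups in which each action induces the identity on the abelianization of each free factor (an almost-direct product of free groups) is bi-orderable, with the lexicographic order built from the Magnus orders on the free factors. -/
/-- `IsAlmostDirectProductOfFreeGroups G instG` says that the group `G` is an
iterated semidirect product `F_{r_ℓ} ⋊ (F_{r_{ℓ-1}} ⋊ (⋯ ⋊ F_{r_1}))` of
finitely generated free groups in which each structure action is by
IA-automorphisms, i.e. the action on the abelianization `H₁` of each new free
factor is trivial. -/
inductive IsAlmostDirectProductOfFreeGroups : ∀ (G : Type), Group G → Prop where
  | free (r : ℕ) (G : Type) (instG : Group G)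
      (e : Nonempty (@MulEquiv G (FreeGroup (Fin r)) (by exact instG.toMul) _)) :
      IsAlmostDirectProductOfFreeGroups G instG
  | step (r : ℕ) (Q : Type) (instQ : Group Q)
      (φ : @MonoidHom Q (MulAut (FreeGroup (Fin r)))
        (by exact instQ.toMulOneClass.toMulOne) _)
      (hQ : IsAlmostDirectProductOfFreeGroups Q instQ)
      (hIA : ∀ (q : Q) (x : FreeGroup (Fin r)),
        Abelianization.of (φ q x) = Abelianization.of x)
      (G : Type) (instG : Group G)
      (e : Nonempty (@MulEquiv G (SemidirectProduct (FreeGroup (Fin r)) Q φ)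
        (by exact instG.toMul) _)) :
      IsAlmostDirectProductOfFreeGroups G instG

open Finset
open scoped Classical

noncomputable section

/-! ### Non-commutative power series -/

/-- Formal power series with integer coefficients in non-commuting variables `X_a`, `a : α`,
given by their coefficients on words. -/
structure NCPowerSeries (α : Type*) where
  ofCoeff ::
  coeff : List α → ℤ

namespace NCPowerSeries

variable {α : Type*}

instance : FunLike (NCPowerSeries α) (List α) ℤ where
  coe := coeff
  coe_injective f g h := by cases f; cases g; congr

@[ext] lemma ext {f g : NCPowerSeries α} (h : ∀ w, f w = g w) : f = g := DFunLike.ext _ _ h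

@[simp] lemma ofCoeff_apply (c : List α → ℤ) (w : List α) : ofCoeff c w = c w := rfl

instance : AddCommGroup (NCPowerSeries α) :=
  (⟨coeff, ofCoeff, fun _ => rfl, fun _ => rfl⟩ : NCPowerSeries α ≃ (List α → ℤ)).addCommGroup

@[simp] lemma add_apply (f g : NCPowerSeries α) (w : List α) : (f + g) w = f w + g w := rfl
@[simp] lemma sub_apply (f g : NCPowerSeries α) (w : List α) : (f - g) w = f w - g w := rfl
@[simp] lemma zero_apply (w : List α) : (0 : NCPowerSeries α) w = 0 := rfl

instance : One (NCPowerSeries α) := ⟨⟨fun w => if w = [] then 1 else 0⟩⟩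

instance : Mul (NCPowerSeries α) :=
  ⟨fun f g => ⟨fun w => ∑ m ∈ range (w.length + 1), f (w.take m) * g (w.drop m)⟩⟩

lemma one_apply (w : List α) : (1 : NCPowerSeries α) w = if w = [] then 1 else 0 := rfl

lemma mul_apply (f g : NCPowerSeries α) (w : List α) :
    (f * g) w = ∑ m ∈ range (w.length + 1), f (w.take m) * g (w.drop m) := rfl

protected lemma mul_assoc (f g h : NCPowerSeries α) : f * g * h = f * (g * h) := by
  ext w
  set n := w.length
  have lhs : (f * g * h) w = ∑ j ∈ range (n + 1), ∑ i ∈ range (j + 1),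
      f (w.take i) * (g ((w.drop i).take (j - i)) * h (w.drop j)) := by
    rw [mul_apply]
    refine sum_congr rfl fun j hj => ?_
    rw [mul_apply, sum_mul, List.length_take, min_eq_left (by simp at hj; omega)]
    refine sum_congr rfl fun i hi => ?_
    rw [List.take_take, min_eq_left (by simp at hi; omega), List.drop_take, mul_assoc]
  have rhs : (f * (g * h)) w = ∑ i ∈ range (n + 1), ∑ j ∈ Ico i (n + 1),
      f (w.take i) * (g ((w.drop i).take (j - i)) * h (w.drop j)) := by
    rw [mul_apply]
    refine sum_congr rfl fun i hi => ?_
    rw [mul_apply, mul_sum, sum_Ico_eq_sum_range, List.length_drop,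
      Nat.sub_add_comm (by simp at hi; omega)]
    refine sum_congr rfl fun k _ => ?_
    simp [List.drop_drop]
  rw [lhs, rhs]
  exact sum_comm' fun j i => by simp only [mem_range, mem_Ico]; omega

protected lemma one_mul (f : NCPowerSeries α) : 1 * f = f := by
  ext w
  rw [mul_apply, sum_eq_single 0 (fun m hm hm0 => ?_) (by simp)]
  · simp [one_apply]
  · simp only [mem_range] at hm
    have : w.take m ≠ [] := List.ne_nil_of_length_pos (by rw [List.length_take]; omega)
    rw [one_apply, if_neg this, zero_mul]

protected lemma mul_one (f : NCPowerSeries α) : f * 1 = f := by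
  ext w
  rw [mul_apply, sum_eq_single w.length (fun m hm hmn => ?_) (by simp)]
  · simp [one_apply]
  · simp only [mem_range] at hm
    rw [one_apply, if_neg (by rw [List.drop_eq_nil_iff]; omega), mul_zero]

instance : Ring (NCPowerSeries α) where
  mul_assoc := NCPowerSeries.mul_assoc
  one_mul := NCPowerSeries.one_mul
  mul_one := NCPowerSeries.mul_one
  left_distrib f g h := by ext w; simp [mul_apply, mul_add, sum_add_distrib]
  right_distrib f g h := by ext w; simp [mul_apply, add_mul, sum_add_distrib]
  zero_mul f := by ext w; simp [mul_apply]
  mul_zero f := by ext w; simp [mul_apply]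

@[simp] lemma one_apply_nil : (1 : NCPowerSeries α) [] = 1 := rfl

@[simp] lemma one_apply_cons (a : α) (w : List α) : (1 : NCPowerSeries α) (a :: w) = 0 := rfl

lemma mul_apply_nil (f g : NCPowerSeries α) : (f * g) [] = f [] * g [] := by
  simp [mul_apply]

/-- `p(X) ↦ p(X_a)`. -/
def ofPowerSeries (a : α) : PowerSeries ℤ →+* NCPowerSeries α where
  toFun p := ⟨fun w => if ∀ b ∈ w, b = a then PowerSeries.coeff w.length p else 0⟩
  map_one' := by
    ext w
    rcases w with _ | ⟨b, w⟩ <;> simp [one_apply, PowerSeries.coeff_one]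
  map_mul' p q := by
    ext w
    rw [mul_apply]
    simp only [ofCoeff_apply]
    split_ifs with hw
    · obtain ⟨n, rfl⟩ : ∃ n, w = List.replicate n a := ⟨_, List.eq_replicate_iff.2 ⟨rfl, hw⟩⟩
      rw [PowerSeries.coeff_mul, Finset.Nat.sum_antidiagonal_eq_sum_range_succ_mk]
      refine sum_congr (by simp) fun m hm => ?_
      simp only [mem_range, List.length_replicate] at hm
      simp [List.take_replicate, List.drop_replicate, min_eq_left (Nat.le_of_lt_succ hm)]
    · refine (sum_eq_zero fun m _ => ?_).symm
      by_cases htake : ∀ b ∈ w.take m, b = a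
      · have hdrop : ¬ ∀ b ∈ w.drop m, b = a := fun hdrop => hw fun b hb => by
          rw [← List.take_append_drop m w, List.mem_append] at hb
          exact hb.elim (htake b) (hdrop b)
        simp [hdrop]
      · simp [htake]
  map_zero' := by ext; simp
  map_add' p q := by
    ext w
    simp only [ofCoeff_apply, add_apply]
    by_cases h : ∀ b ∈ w, b = a
    · simp only [if_pos h, map_add]
    · simp only [if_neg h, add_zero]

lemma ofPowerSeries_apply (a : α) (p : PowerSeries ℤ) (w : List α) :
    ofPowerSeries a p w = if ∀ b ∈ w, b = a then PowerSeries.coeff w.length p else 0 :=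
  rfl

def X (a : α) : NCPowerSeries α := ⟨fun w => if w = [a] then 1 else 0⟩

lemma ofPowerSeries_X (a : α) : ofPowerSeries a PowerSeries.X = X a := by
  ext w
  change ite _ _ _ = ite _ _ _
  rcases w with _ | ⟨b, _ | ⟨c, w⟩⟩ <;> simp [PowerSeries.coeff_X, eq_comm]

lemma X_mul_apply_nil (a : α) (f : NCPowerSeries α) : (X a * f) [] = 0 := by
  simp [mul_apply_nil, X]

lemma X_mul_apply_cons (a b : α) (f : NCPowerSeries α) (w : List α) :
    (X a * f) (b :: w) = if b = a then f w else 0 := by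
  rw [mul_apply, sum_eq_single 1 (fun m hmr hm => ?_) (by simp)]
  · simp [X]
  · have : (b :: w).take m ≠ [a] := fun h => by
      have := congrArg List.length h
      simp at this hmr
      omega
    simp [X, this]

def VanishesBelow (n : ℕ) (f : NCPowerSeries α) : Prop := ∀ w : List α, w.length < n → f w = 0

lemma VanishesBelow.mul {a b : ℕ} {f g : NCPowerSeries α} (hf : VanishesBelow a f)
    (hg : VanishesBelow b g) : VanishesBelow (a + b) (f * g) := fun w hw => by
  rw [mul_apply]
  refine sum_eq_zero fun m hm => ?_
  simp only [mem_range] at hm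
  rcases lt_or_ge m a with hma | hma
  · rw [hf _ (by simp; omega), zero_mul]
  · rw [hg _ (by simp; omega), mul_zero]

lemma mul_apply_of_vanishesBelow {a b : ℕ} {f g : NCPowerSeries α} (hf : VanishesBelow a f)
    (hg : VanishesBelow b g) {w : List α} (hw : w.length = a + b) :
    (f * g) w = f (w.take a) * g (w.drop a) := by
  rw [mul_apply, sum_eq_single a (fun m hm hma => ?_) (by simp; omega)]
  simp only [mem_range] at hm
  rcases lt_or_gt_of_ne hma with hma | hma
  · rw [hf _ (by simp; omega), zero_mul]
  · rw [hg _ (by simp; omega), mul_zero]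

lemma vanishesBelow_prod_map {F : α → NCPowerSeries α} (hF : ∀ a, VanishesBelow 1 (F a))
    (v : List α) : VanishesBelow v.length (v.map F).prod := by
  induction v with
  | nil => intro w hw; simp at hw
  | cons a v ih => simpa [add_comm] using (hF a).mul ih

lemma prod_map_apply_of_length_eq {F : α → NCPowerSeries α} (hF : ∀ a, VanishesBelow 1 (F a))
    (hF1 : ∀ a b, F a [b] = X a [b]) :
    ∀ (v w : List α), w.length = v.length → (v.map F).prod w = if w = v then 1 else 0
  | [], [], _ => by simp
  | a :: v, b :: w, h => by
    rw [List.map_cons, List.prod_cons,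
      mul_apply_of_vanishesBelow (hF a) (vanishesBelow_prod_map hF v) (by simp at h ⊢; omega)]
    rw [List.take_one, List.drop_one, List.head?_cons, Option.toList_some, List.tail_cons, hF1,
      prod_map_apply_of_length_eq hF hF1 v w (by simpa using h)]
    by_cases hb : b = a <;> by_cases hw : w = v <;> simp [X, hb, hw]

lemma mul_apply_of_vanishesBelow_right (h : NCPowerSeries α) {n : ℕ} {d : NCPowerSeries α}
    (hd : VanishesBelow n d) {w : List α} (hw : w.length ≤ n) : (h * d) w = h [] * d w := by
  rw [mul_apply, sum_eq_single 0 (fun m hm hm0 => ?_) (by simp)]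
  · simp
  · simp only [mem_range] at hm
    rw [hd _ (by simp; omega), mul_zero]

lemma mul_apply_of_vanishesBelow_left {n : ℕ} {d : NCPowerSeries α} (hd : VanishesBelow n d)
    (h : NCPowerSeries α) {w : List α} (hw : w.length ≤ n) : (d * h) w = d w * h [] := by
  rw [mul_apply, sum_eq_single w.length (fun m hm hm0 => ?_) (by simp)]
  · simp
  · simp only [mem_range] at hm
    rw [hd _ (by simp; omega), zero_mul]

def AlternatingDegreeLE (d : ℕ) (f : NCPowerSeries α) : Prop :=
  ∀ w : List α, w.IsChain (· ≠ ·) → d < w.length → f w = 0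

lemma AlternatingDegreeLE.mul {a b : ℕ} {f g : NCPowerSeries α} (hf : AlternatingDegreeLE a f)
    (hg : AlternatingDegreeLE b g) : AlternatingDegreeLE (a + b) (f * g) := fun w hw hlen => by
  rw [mul_apply]
  refine sum_eq_zero fun m hm => ?_
  rcases le_or_gt (w.take m).length a with h | h
  · rw [hg _ (hw.drop m) (by simp at h hm ⊢; omega), mul_zero]
  · rw [hf _ (hw.take m) h, zero_mul]

lemma alternatingDegreeLE_ofPowerSeries (a : α) (p : PowerSeries ℤ) :
    AlternatingDegreeLE 1 (ofPowerSeries a p) := by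
  rintro (_ | ⟨b, _ | ⟨c, w⟩⟩) hw hlen
  · simp at hlen
  · simp at hlen
  · have : ¬ ∀ x ∈ b :: c :: w, x = a := fun h =>
      (List.isChain_cons_cons.1 hw).1 ((h b (by simp)).trans (h c (by simp)).symm)
    rw [ofPowerSeries_apply, if_neg this]

lemma mul_apply_singleton (f g : NCPowerSeries α) (b : α) :
    (f * g) [b] = f [] * g [b] + f [b] * g [] := by
  simp [mul_apply, sum_range_succ]

end NCPowerSeries

/-! ### The Magnus embedding -/

namespace FreeGroup

open NCPowerSeries

variable {α : Type*}

/-- The Magnus map `x_a ↦ 1 + X_a`, with `(1 + X_a)⁻¹` the image of `(1 + X)⁻¹ ∈ ℤ⟦X⟧`. -/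
def magnus : FreeGroup α →* (NCPowerSeries α)ˣ :=
  FreeGroup.lift fun a => Units.map (ofPowerSeries a).toMonoidHom
    (PowerSeries.isUnit_iff_constantCoeff (φ := 1 + PowerSeries.X).2 (by simp)).unit

lemma magnus_of (a : α) : (magnus (of a) : NCPowerSeries α) = 1 + X a := by
  simp [magnus, ofPowerSeries_X]

lemma exists_magnus_zpow_of (a : α) (e : ℤ) :
    ∃ p, (magnus (of a ^ e) : NCPowerSeries α) = ofPowerSeries a p :=
  ⟨_, by rw [_root_.map_zpow, magnus, lift_apply_of, ← _root_.map_zpow, Units.coe_map]; rfl⟩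

lemma magnus_apply_nil (g : FreeGroup α) : (magnus g : NCPowerSeries α) [] = 1 := by
  induction g using FreeGroup.induction_on with
  | C1 => simp
  | of a => simp [magnus_of, X]
  | inv_of a h =>
    have := congrArg (· []) (magnus (of a)).inv_mul
    rw [_root_.map_inv]
    simpa only [mul_apply_nil, h, mul_one, one_apply_nil] using this
  | mul g g' hg hg' => simp [mul_apply_nil, hg, hg']

def magnusCoeffSingleton (b : α) : FreeGroup α →* Multiplicative ℤ where
  toFun g := .ofAdd ((magnus g : NCPowerSeries α) [b])
  map_one' := by simp [one_apply]
  map_mul' g g' := by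
    rw [← ofAdd_add, _root_.map_mul, Units.val_mul, mul_apply_singleton, magnus_apply_nil,
      magnus_apply_nil, one_mul, mul_one, add_comm]

lemma magnus_apply_singleton_eq_of_abelianization_eq {g g' : FreeGroup α}
    (h : Abelianization.of g = Abelianization.of g') (b : α) :
    (magnus g : NCPowerSeries α) [b] = (magnus g' : NCPowerSeries α) [b] := by
  have := congrArg (Abelianization.lift (magnusCoeffSingleton b)) h
  simpa [magnusCoeffSingleton] using this

lemma magnus_zpow_of_apply_singleton (a : α) (e : ℤ) :
    (magnus (of a ^ e) : NCPowerSeries α) [a] = e := by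
  have h1 : magnusCoeffSingleton a (of a) = .ofAdd 1 := by
    simp [magnusCoeffSingleton, magnus_of, X]
  have h2 : magnusCoeffSingleton a (of a ^ e) = .ofAdd e := by
    rw [_root_.map_zpow, h1, ← ofAdd_zsmul, smul_eq_mul, mul_one]
  exact congrArg Multiplicative.toAdd h2

def ofSyllables (l : List (α × ℤ)) : FreeGroup α := (l.map fun p => of p.1 ^ p.2).prod

@[simp] lemma ofSyllables_nil : ofSyllables ([] : List (α × ℤ)) = 1 := rfl

@[simp] lemma ofSyllables_cons (p : α × ℤ) (l : List (α × ℤ)) :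
    ofSyllables (p :: l) = of p.1 ^ p.2 * ofSyllables l :=
  rfl

def IsSyllableDecomposition (l : List (α × ℤ)) (g : FreeGroup α) : Prop :=
  l.IsChain (fun p q => p.1 ≠ q.1) ∧ (∀ p ∈ l, p.2 ≠ 0) ∧ ofSyllables l = g

lemma IsSyllableDecomposition.exists_zpow_of_mul {l : List (α × ℤ)} {g : FreeGroup α}
    (hl : IsSyllableDecomposition l g) (a : α) (s : ℤ) :
    ∃ l', IsSyllableDecomposition l' (of a ^ s * g) := by
  obtain ⟨hc, hne, rfl⟩ := hl
  by_cases hs : s = 0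
  · exact ⟨l, hc, hne, by simp [hs]⟩
  rcases l with _ | ⟨⟨b, e⟩, l⟩
  · exact ⟨[(a, s)], by simp, by simpa using hs, by simp⟩
  by_cases hb : b = a
  · subst hb
    by_cases hse : s + e = 0
    · exact ⟨l, hc.tail, fun p hp => hne p (List.mem_cons_of_mem _ hp),
        by simp [← mul_assoc, ← zpow_add, hse]⟩
    · refine ⟨(b, s + e) :: l, ?_, ?_, by simp [← mul_assoc, ← zpow_add]⟩
      · rcases l with _ | ⟨q, l⟩
        · simp
        · simpa [List.isChain_cons_cons] using hc
      · simpa [hse] using fun p hp => hne p (List.mem_cons_of_mem _ hp)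
  · refine ⟨(a, s) :: (b, e) :: l, List.isChain_cons_cons.2 ⟨Ne.symm hb, hc⟩, ?_, by simp⟩
    simpa [hs] using hne

theorem exists_isSyllableDecomposition (g : FreeGroup α) :
    ∃ l, IsSyllableDecomposition l g := by
  suffices ∀ g' h, (∃ l, IsSyllableDecomposition l h) → ∃ l, IsSyllableDecomposition l (g' * h) by
    simpa using this g 1 ⟨[], by simp [IsSyllableDecomposition]⟩
  intro g'
  induction g' using FreeGroup.induction_on with
  | C1 => simp
  | of a => rintro h ⟨l, hl⟩; simpa using hl.exists_zpow_of_mul a 1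
  | inv_of a _ => rintro h ⟨l, hl⟩; simpa using hl.exists_zpow_of_mul a (-1)
  | mul g₁ g₂ ih₁ ih₂ => intro h hh; simpa [mul_assoc] using ih₁ _ (ih₂ h hh)

lemma alternatingDegreeLE_magnus_ofSyllables (l : List (α × ℤ)) :
    AlternatingDegreeLE l.length (magnus (ofSyllables l) : NCPowerSeries α) := by
  induction l with
  | nil =>
    rintro (_ | ⟨a, w⟩) _ hlen
    · simp at hlen
    · simp
  | cons p l ih =>
    obtain ⟨q, hq⟩ := exists_magnus_zpow_of p.1 p.2
    rw [ofSyllables_cons, _root_.map_mul, Units.val_mul, hq, List.length_cons, add_comm]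
    exact (alternatingDegreeLE_ofPowerSeries p.1 q).mul ih

/-- Reading the word `a₁ ⋯ aₖ` off `∏ (1 + X_{aᵢ})^{eᵢ}`, the first factor must contribute exactly
`a₁`: a longer prefix is an alternating word of length `≥ 2`, which `(1 + X_{a₁})^{e₁}` does not
see, and the empty prefix leaves an alternating word too long for the remaining `k - 1` factors. -/
lemma magnus_ofSyllables_apply {l : List (α × ℤ)} (hl : l.IsChain (fun p q => p.1 ≠ q.1)) :
    (magnus (ofSyllables l) : NCPowerSeries α) (l.map Prod.fst) = (l.map Prod.snd).prod := by
  induction l with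
  | nil => simp
  | cons p l ih =>
    obtain ⟨a, e⟩ := p
    simp only [ofSyllables_cons, List.map_cons, List.prod_cons, _root_.map_mul, Units.val_mul]
    set w := l.map Prod.fst
    have hw : (a :: w).IsChain (· ≠ ·) := (List.isChain_map Prod.fst).2 hl
    obtain ⟨q, hq⟩ := exists_magnus_zpow_of a e
    have hlong : ∀ m ∈ range w.length,
        (magnus (of a ^ e) : NCPowerSeries α) ((a :: w).take (m + 1 + 1)) = 0 := fun m hm => by
      rw [hq]
      exact alternatingDegreeLE_ofPowerSeries a q _ (hw.take _) (by simp at hm ⊢; omega)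
    have hfirst := alternatingDegreeLE_magnus_ofSyllables l _ hw (by simp [w])
    rw [mul_apply, List.length_cons, sum_range_succ', sum_range_succ', sum_eq_zero fun m hm => by
      rw [hlong m hm, zero_mul]]
    simp only [zero_add, List.take_succ_cons, List.take_zero, List.drop_succ_cons, List.drop_zero,
      magnus_zpow_of_apply_singleton, magnus_apply_nil, hfirst, ih hl.tail, mul_zero, add_zero]

theorem magnus_injective : Function.Injective (magnus : FreeGroup α →* (NCPowerSeries α)ˣ) := by
  refine (injective_iff_map_eq_one _).2 fun g hg => ?_
  obtain ⟨l, hchain, hne, rfl⟩ := exists_isSyllableDecomposition g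
  rcases l with _ | ⟨p, l⟩
  · simp
  have := magnus_ofSyllables_apply hchain
  rw [hg] at this
  refine absurd this.symm (List.prod_ne_zero fun h => ?_)
  obtain ⟨x, hx, hx0⟩ := List.mem_map.1 h
  exact hne x hx hx0

end FreeGroup

/-! ### The Magnus order -/

instance List.Shortlex.isWellOrder {α : Type*} [LinearOrder α] [WellFoundedLT α] :
    IsWellOrder (List α) (List.Shortlex (· < ·)) where
  wf := List.Shortlex.wf wellFounded_lt
  toTrichotomous := inferInstance

instance Pi.Lex.isStrictTotalOrder {ι β : Type*} {r : ι → ι → Prop} [IsWellOrder ι r]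
    [LinearOrder β] : IsStrictTotalOrder (ι → β) (Pi.Lex r (· < ·)) where
  toTrichotomous := Pi.trichotomous_lex r _ IsWellFounded.wf
  irrefl _ := fun ⟨_, _, h⟩ => lt_irrefl _ h
  trans := by
    rintro a b c ⟨i, hi, hab⟩ ⟨j, hj, hbc⟩
    rcases trichotomous_of r i j with hij | rfl | hji
    · exact ⟨i, fun k hk => (hi k hk).trans (hj k (trans_of r hk hij)), hj i hij ▸ hab⟩
    · exact ⟨i, fun k hk => (hi k hk).trans (hj k hk), hab.trans hbc⟩
    · exact ⟨j, fun k hk => (hi k (trans_of r hk hji)).trans (hj k hk), (hi j hji).symm ▸ hbc⟩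

namespace NCPowerSeries

variable {α : Type*} [LinearOrder α]

def MagnusLT (f g : NCPowerSeries α) : Prop :=
  Pi.Lex (List.Shortlex (· < ·)) (· < ·) (f : List α → ℤ) g

instance [WellFoundedLT α] : IsStrictTotalOrder (NCPowerSeries α) MagnusLT :=
  (RelEmbedding.preimage ⟨DFunLike.coe, DFunLike.coe_injective⟩
    (Pi.Lex (List.Shortlex (· < ·)) (· < ·))).isStrictTotalOrder

/-- Whether `f < g` only depends on the lowest nonzero homogeneous part of `g - f`. -/
lemma MagnusLT.of_sub_agree {f g f' g' : NCPowerSeries α} (hlt : MagnusLT f g)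
    (h : ∀ n, VanishesBelow n (g - f) → ∀ w : List α, w.length ≤ n → (g' - f') w = (g - f) w) :
    MagnusLT f' g' := by
  obtain ⟨w, hbelow, hw⟩ := hlt
  have hvan : VanishesBelow w.length (g - f) := fun v hv => by
    simp [hbelow v (List.Shortlex.of_length_lt hv)]
  have hagree v (hv : v.length ≤ w.length) : g' v - f' v = g v - f v := h _ hvan v hv
  refine ⟨w, fun v hv => ?_, ?_⟩
  · have := hagree v (by rcases List.shortlex_def.1 hv with h | h <;> omega)
    rw [hbelow v hv, sub_self, sub_eq_zero] at this
    exact this.symm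
  · have := hagree w le_rfl
    change f w < g w at hw
    change f' w < g' w
    linarith

lemma MagnusLT.mul_left {f g : NCPowerSeries α} (hlt : MagnusLT f g) {c : NCPowerSeries α}
    (hc : c [] = 1) : MagnusLT (c * f) (c * g) :=
  hlt.of_sub_agree fun _ hn _ hw => by
    rw [← mul_sub, mul_apply_of_vanishesBelow_right c hn hw, hc, one_mul]

lemma MagnusLT.mul_right {f g : NCPowerSeries α} (hlt : MagnusLT f g) {c : NCPowerSeries α}
    (hc : c [] = 1) : MagnusLT (f * c) (g * c) :=
  hlt.of_sub_agree fun _ hn _ hw => by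
    rw [← sub_mul, mul_apply_of_vanishesBelow_left hn c hw, hc, mul_one]

end NCPowerSeries

/-! ### Substitutions and IA-endomorphisms -/

namespace NCPowerSeries

variable {α : Type*} [Finite α]

def wordsLE (n : ℕ) : Finset (List α) := (List.finite_length_le α n).toFinset

lemma mem_wordsLE {n : ℕ} {v : List α} : v ∈ wordsLE n ↔ v.length ≤ n :=
  Set.Finite.mem_toFinset _

/-- The substitution `X_a ↦ F a`. Only words of length `≤ |w|` are summed over for the
coefficient at `w`, which loses nothing when no `F a` has a constant term. -/
def subst (F : α → NCPowerSeries α) : NCPowerSeries α →+ NCPowerSeries α where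
  toFun f := ofCoeff fun w => ∑ v ∈ wordsLE w.length, f v * (v.map F).prod w
  map_zero' := by ext; simp
  map_add' f g := by ext; simp [add_mul, sum_add_distrib]

variable {F : α → NCPowerSeries α}

lemma subst_apply (F : α → NCPowerSeries α) (f : NCPowerSeries α) (w : List α) :
    subst F f w = ∑ v ∈ wordsLE w.length, f v * (v.map F).prod w :=
  rfl

lemma subst_apply_of_length_le (hF : ∀ a, VanishesBelow 1 (F a)) {n : ℕ} {w : List α}
    (hw : w.length ≤ n) (f : NCPowerSeries α) :
    subst F f w = ∑ v ∈ wordsLE n, f v * (v.map F).prod w := by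
  refine sum_subset (fun v hv => mem_wordsLE.2 ((mem_wordsLE.1 hv).trans hw)) fun v _ hv => ?_
  rw [vanishesBelow_prod_map hF v w (by simpa [mem_wordsLE] using hv), mul_zero]

lemma subst_one : subst F 1 = 1 := by
  ext w
  rw [subst_apply, sum_eq_single [] (fun v _ hv => ?_) (by simp [mem_wordsLE])]
  · simp
  · rcases v with _ | ⟨a, v⟩
    · contradiction
    · simp

lemma subst_X_mul (hF : ∀ a, VanishesBelow 1 (F a)) (a : α) (f : NCPowerSeries α) :
    subst F (X a * f) = F a * subst F f := by
  ext w
  have himage : (wordsLE w.length).image (List.cons a) ⊆ wordsLE (w.length + 1) := by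
    intro v
    simp only [mem_image, mem_wordsLE]
    rintro ⟨t, ht, rfl⟩
    simpa
  calc subst F (X a * f) w
      = ∑ v ∈ wordsLE (w.length + 1), (X a * f) v * (v.map F).prod w :=
        subst_apply_of_length_le hF (by omega) _
    _ = ∑ t ∈ wordsLE w.length, f t * (F a * (t.map F).prod) w := by
        rw [← sum_subset himage fun v hv hvnot => ?_,
          sum_image fun _ _ _ _ h => List.cons_injective h]
        · simp [X_mul_apply_cons]
        · rcases v with _ | ⟨b, t⟩
          · simp [X_mul_apply_nil]
          · have hb : b ≠ a := by
              rintro rfl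
              exact hvnot (mem_image.2 ⟨t, mem_wordsLE.2 (by simpa [mem_wordsLE] using hv), rfl⟩)
            simp [X_mul_apply_cons, hb]
    _ = ∑ m ∈ range (w.length + 1),
          F a (w.take m) * ∑ t ∈ wordsLE w.length, f t * (t.map F).prod (w.drop m) := by
        simp only [mul_apply, mul_sum]
        exact sum_comm.trans (sum_congr rfl fun _ _ => sum_congr rfl fun _ _ => by ring)
    _ = (F a * subst F f) w := by
        rw [mul_apply]
        exact sum_congr rfl fun m _ => by rw [subst_apply_of_length_le hF (n := w.length) (by simp)]

lemma subst_apply_of_vanishesBelow (hF : ∀ a, VanishesBelow 1 (F a))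
    (hF1 : ∀ a b, F a [b] = X a [b]) {n : ℕ} {d : NCPowerSeries α}
    (hd : VanishesBelow n d) {w : List α} (hw : w.length ≤ n) : subst F d w = d w := by
  rw [subst_apply, sum_eq_single w (fun v hv hvw => ?_) (by simp [mem_wordsLE])]
  · rw [prod_map_apply_of_length_eq hF hF1 w w rfl, if_pos rfl, mul_one]
  · rcases lt_or_eq_of_le (mem_wordsLE.1 hv) with hlt | heq
    · rw [hd v (by omega), zero_mul]
    · rw [prod_map_apply_of_length_eq hF hF1 v w heq.symm, if_neg (Ne.symm hvw), mul_zero]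

end NCPowerSeries

namespace FreeGroup

open NCPowerSeries

variable {α : Type*}

lemma vanishesBelow_one_magnus_sub_one (g : FreeGroup α) :
    VanishesBelow 1 ((magnus g : NCPowerSeries α) - 1) := fun w hw => by
  simp [List.length_eq_zero_iff.1 (by omega : w.length = 0), magnus_apply_nil]

lemma magnus_map_eq_subst [Finite α] (φ : FreeGroup α →* FreeGroup α) (g : FreeGroup α) :
    (magnus (φ g) : NCPowerSeries α) =
      subst (fun a => (magnus (φ (of a)) : NCPowerSeries α) - 1) (magnus g) := by
  set F : α → NCPowerSeries α := fun a => (magnus (φ (of a)) : NCPowerSeries α) - 1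
  have hF a : VanishesBelow 1 (F a) := vanishesBelow_one_magnus_sub_one _
  suffices ∀ g f, subst F ((magnus g : NCPowerSeries α) * f) =
      (magnus (φ g) : NCPowerSeries α) * subst F f by
    simpa [subst_one] using (this g 1).symm
  intro g
  induction g using FreeGroup.induction_on with
  | C1 => simp
  | of a =>
    intro f
    rw [magnus_of, add_mul, one_mul, map_add, subst_X_mul hF]
    simp only [F]
    noncomm_ring
  | inv_of a ih =>
    intro f
    have := ih (↑(magnus (of a))⁻¹ * f)
    rw [Units.mul_inv_cancel_left] at this
    rw [_root_.map_inv, _root_.map_inv, _root_.map_inv, this, Units.inv_mul_cancel_left]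
  | mul g g' ih ih' => intro f; simp [mul_assoc, ih, ih']

theorem magnusLT_map [LinearOrder α] [Finite α] {φ : FreeGroup α →* FreeGroup α}
    (hφ : ∀ x, Abelianization.of (φ x) = Abelianization.of x) {g h : FreeGroup α}
    (hlt : MagnusLT (magnus g : NCPowerSeries α) (magnus h)) :
    MagnusLT (magnus (φ g) : NCPowerSeries α) (magnus (φ h)) := by
  have hF1 a b : ((magnus (φ (of a)) : NCPowerSeries α) - 1) [b] = X a [b] := by
    simp [magnus_apply_singleton_eq_of_abelianization_eq (hφ (of a)), magnus_of]
  refine hlt.of_sub_agree fun n hn w hw => ?_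
  rw [magnus_map_eq_subst, magnus_map_eq_subst, ← map_sub,
    subst_apply_of_vanishesBelow (fun _ => vanishesBelow_one_magnus_sub_one _) hF1 hn hw]

end FreeGroup

/-! ### Bi-orderings of free groups and of their extensions -/

namespace IsBiOrdering

variable {G H : Type*} [Group G] [Group H]

theorem comap {lt : H → H → Prop} (h : IsBiOrdering lt) (f : G →* H)
    (hf : Function.Injective f) : IsBiOrdering fun a b => lt (f a) (f b) := by
  have := h.1
  refine ⟨(RelEmbedding.preimage ⟨f, hf⟩ lt).isStrictTotalOrder, fun a b c hab => ?_,
    fun a b c hab => ?_⟩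
  · simpa only [map_mul] using h.2.1 _ _ (f c) hab
  · simpa only [map_mul] using h.2.2 _ _ (f c) hab

theorem semidirectProduct {N Q : Type*} [Group N] [Group Q] {φ : Q →* MulAut N}
    {ltN : N → N → Prop} {ltQ : Q → Q → Prop} (hN : IsBiOrdering ltN) (hQ : IsBiOrdering ltQ)
    (hφ : ∀ q a b, ltN a b → ltN (φ q a) (φ q b)) :
    IsBiOrdering fun x y : N ⋊[φ] Q => Prod.Lex ltQ ltN (x.right, x.left) (y.right, y.left) := by
  have := hN.1
  have := hQ.1
  have : IsStrictTotalOrder (Q × N) (Prod.Lex ltQ ltN) := { }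
  have hinj : Function.Injective fun x : N ⋊[φ] Q => (x.right, x.left) := fun x y h =>
    SemidirectProduct.ext (congrArg Prod.snd h) (congrArg Prod.fst h)
  refine ⟨(RelEmbedding.preimage ⟨_, hinj⟩ (Prod.Lex ltQ ltN)).isStrictTotalOrder,
    fun a b c hab => ?_, fun a b c hab => ?_⟩ <;>
  simp only [Prod.lex_def, SemidirectProduct.mul_left, SemidirectProduct.mul_right] at hab ⊢
  · rcases hab with hab | ⟨heq, hab⟩
    · exact Or.inl (hQ.2.1 _ _ _ hab)
    · exact Or.inr ⟨by rw [heq], hN.2.1 _ _ _ (hφ _ _ _ hab)⟩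
  · rcases hab with hab | ⟨heq, hab⟩
    · exact Or.inl (hQ.2.2 _ _ _ hab)
    · exact Or.inr ⟨by rw [heq], by rw [heq]; exact hN.2.2 _ _ _ hab⟩

end IsBiOrdering

namespace FreeGroup

open NCPowerSeries

theorem isBiOrdering_magnusLT {α : Type*} [LinearOrder α] [WellFoundedLT α] :
    IsBiOrdering fun g h : FreeGroup α => MagnusLT (magnus g : NCPowerSeries α) (magnus h) := by
  refine ⟨(RelEmbedding.preimage ⟨_, Units.val_injective.comp magnus_injective⟩
    MagnusLT).isStrictTotalOrder, fun a b c hab => ?_, fun a b c hab => ?_⟩ <;>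
  simp only [_root_.map_mul, Units.val_mul]
  · exact hab.mul_left (magnus_apply_nil c)
  · exact hab.mul_right (magnus_apply_nil c)

end FreeGroup

end

/-- An almost-direct product of free groups — an iterated semidirect product of
free groups in which each action induces the identity on the abelianization of
each free factor — is bi-orderable (via the lexicographic order built from the
Magnus orders on the free factors). -/
theorem almostDirectProductOfFreeGroups_biOrderable
    (G : Type) [instG : Group G]
    (hG : IsAlmostDirectProductOfFreeGroups G instG) :
    ∃ lt : G → G → Prop, IsBiOrdering lt := by
  induction hG with
  | free _ _ _ e =>
    obtain ⟨e⟩ := e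
    exact ⟨_, FreeGroup.isBiOrdering_magnusLT.comap e.toMonoidHom e.injective⟩
  | step _ _ _ φ _ hIA _ _ e ih =>
    obtain ⟨ltQ, hltQ⟩ := ih
    obtain ⟨e⟩ := e
    exact ⟨_, (FreeGroup.isBiOrdering_magnusLT.semidirectProduct hltQ fun q _ _ h =>
      FreeGroup.magnusLT_map (φ := (φ q).toMonoidHom) (hIA q) h).comap e.toMonoidHom e.injective⟩
end
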